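/- Let X be a topological space with θⁿ-Uc(X) ≤ κ (every θⁿ-Urysohn cellular family of open sets has cardinality ≤ κ), and let {U_α}_{α∈A} be a family of open subsets of X. Then there exists B ⊆ A with |B| ≤ κ such that ⋃_{α∈A} U_α ⊆ cl_γⁿ(⋃_{β∈B} cl_θⁿ(U_β)). -/

import Mathlib

/-!
Take, by Zorn's lemma, a maximal family `V` of open sets, each contained in some `U i`, whose
`θⁿ`-closures are pairwise disjoint; it is `θⁿ`-Urysohn cellular, so it has at most `κ` members,
and choosing for each member an index `i` with `W ⊆ U i` gives `B`. If a neighbourhood `W` of a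
point `x ∈ U j` had `θⁿ`-closure missing every `θⁿ(U_β)`, `β ∈ B`, then `W ∩ U j` could be
added to `V`, contradicting maximality (or, if it is already in `V`, its `θⁿ`-closure would be
disjoint from itself although it contains `x`).
-/

open Set Topology Cardinal

universe u v

def thetaCl (X : Type u) [TopologicalSpace X] (A : Set X) : Set X :=
  {x | ∀ U : Set X, IsOpen U → x ∈ U → (closure U ∩ A).Nonempty}

def thetaClN (X : Type u) [TopologicalSpace X] (n : ℕ) (A : Set X) : Set X :=
  (thetaCl X)^[n] A

def gammaCl (X : Type u) [TopologicalSpace X] (n : ℕ) (A : Set X) : Set X :=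
  {x | ∀ U : Set X, IsOpen U → x ∈ U → (thetaClN X n U ∩ A).Nonempty}

def ThetaUrysohn (X : Type u) [TopologicalSpace X] (n : ℕ) : Prop :=
  ∀ x y : X, x ≠ y → ∃ U V : Set X, IsOpen U ∧ IsOpen V ∧ x ∈ U ∧ y ∈ V ∧
    thetaClN X n U ∩ thetaClN X n V = ∅

section Maximal

variable {α : Type*}

theorem exists_maximal_pairwise (P : Set α) (r : α → α → Prop) :
    ∃ V : Set α, Maximal (fun V : Set α => V ⊆ P ∧ V.Pairwise r) V :=
  zorn_subset _ fun c hcS hc =>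
    ⟨⋃₀ c, ⟨sUnion_subset fun _ hs => (hcS hs).1,
      hc.pairwise_sUnion.2 fun _ hs => (hcS hs).2⟩, fun _ => subset_sUnion_of_mem⟩

theorem Maximal.mem_of_pairwise {P : Set α} {r : α → α → Prop} {V : Set α}
    (hV : Maximal (fun V : Set α => V ⊆ P ∧ V.Pairwise r) V) {a : α} (ha : a ∈ P)
    (hr : ∀ b ∈ V, r a b ∧ r b a) : a ∈ V :=
  hV.mem_of_prop_insert
    ⟨insert_subset ha hV.prop.1, pairwise_insert.2 ⟨hV.prop.2, fun b hb _ => hr b hb⟩⟩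

end Maximal

section ThetaClosure

variable {X : Type*} [TopologicalSpace X] {n : ℕ} {A B : Set X}

theorem thetaCl_mono (h : A ⊆ B) : thetaCl X A ⊆ thetaCl X B :=
  fun _ hx W hW hxW => (hx W hW hxW).mono (inter_subset_inter_right _ h)

theorem subset_thetaCl (A : Set X) : A ⊆ thetaCl X A :=
  fun x hx _ _ hxW => ⟨x, subset_closure hxW, hx⟩

theorem thetaClN_mono (n : ℕ) (h : A ⊆ B) : thetaClN X n A ⊆ thetaClN X n B := by
  induction n generalizing A B with
  | zero => exact h
  | succ m ih => exact ih (thetaCl_mono h)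

theorem subset_thetaClN (n : ℕ) (A : Set X) : A ⊆ thetaClN X n A := by
  induction n generalizing A with
  | zero => exact subset_rfl
  | succ m ih => exact (subset_thetaCl A).trans (ih _)

theorem gammaCl_mono (h : A ⊆ B) : gammaCl X n A ⊆ gammaCl X n B :=
  fun _ hx W hW hxW => (hx W hW hxW).mono (inter_subset_inter_right _ h)

end ThetaClosure

theorem iUnion_subset_gammaCl_of_maximal {X : Type*} [TopologicalSpace X] {n : ℕ} {ι : Type*}
    {U : ι → Set X} (hU : ∀ i, IsOpen (U i)) {V : Set (Set X)}
    (hV : Maximal (fun V : Set (Set X) => V ⊆ {W | IsOpen W ∧ ∃ i, W ⊆ U i} ∧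
      V.PairwiseDisjoint (thetaClN X n)) V) :
    (⋃ i, U i) ⊆ gammaCl X n (⋃ W ∈ V, thetaClN X n W) := by
  intro x hx W hW hxW
  obtain ⟨j, hxj⟩ := mem_iUnion.1 hx
  by_contra hmiss
  have hmiss : Disjoint (thetaClN X n W) (⋃ W₀ ∈ V, thetaClN X n W₀) :=
    disjoint_iff_inter_eq_empty.2 (not_nonempty_iff_eq_empty.1 hmiss)
  have hdisj : ∀ W₀ ∈ V, Disjoint (thetaClN X n (W ∩ U j)) (thetaClN X n W₀) := fun W₀ hW₀ =>
    (disjoint_iUnion₂_right.1 hmiss W₀ hW₀).mono_left (thetaClN_mono n inter_subset_left)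
  have hmem : W ∩ U j ∈ V :=
    hV.mem_of_pairwise ⟨hW.inter (hU j), j, inter_subset_right⟩
      fun W₀ hW₀ => ⟨hdisj W₀ hW₀, (hdisj W₀ hW₀).symm⟩
  exact disjoint_self.1 (hdisj _ hmem) |>.subset (subset_thetaClN n _ ⟨hxW, hxj⟩)

theorem exists_subfamily_gammaCl_general (X : Type u) [TopologicalSpace X] (n : ℕ)
    (κ : Cardinal.{u})
    (hUc : ∀ V : Set (Set X), (∀ U ∈ V, IsOpen U) →
      (∀ U₁ ∈ V, ∀ U₂ ∈ V, U₁ ≠ U₂ → thetaClN X n U₁ ∩ thetaClN X n U₂ = ∅) →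
      #V ≤ κ)
    {ι : Type u} (U : ι → Set X) (hU : ∀ i, IsOpen (U i)) :
    ∃ B : Set ι, #B ≤ κ ∧
      (⋃ i, U i) ⊆ gammaCl X n (⋃ i ∈ B, thetaClN X n (U i)) := by
  obtain ⟨V, hV⟩ := exists_maximal_pairwise {W : Set X | IsOpen W ∧ ∃ i, W ⊆ U i}
    fun A B => Disjoint (thetaClN X n A) (thetaClN X n B)
  choose g hg using fun W : V => (hV.prop.1 W.2).2
  have hcard : #V ≤ κ := hUc V (fun W hW => (hV.prop.1 hW).1)
    fun W₁ hW₁ W₂ hW₂ hne => disjoint_iff_inter_eq_empty.1 (hV.prop.2 hW₁ hW₂ hne)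
  refine ⟨range g, mk_range_le.trans hcard, (iUnion_subset_gammaCl_of_maximal hU hV).trans ?_⟩
  refine gammaCl_mono (iUnion₂_subset fun W hW => ?_)
  exact (thetaClN_mono n (hg ⟨W, hW⟩)).trans
    (subset_biUnion_of_mem (u := fun i => thetaClN X n (U i)) (mem_range_self _))

theorem exists_subfamily_gammaCl (X : Type u) [TopologicalSpace X] (n : ℕ)
    (κ : Cardinal.{u}) (hκ : ℵ₀ ≤ κ)
    (hUc : ∀ V : Set (Set X), (∀ U ∈ V, IsOpen U) →
      (∀ U₁ ∈ V, ∀ U₂ ∈ V, U₁ ≠ U₂ → thetaClN X n U₁ ∩ thetaClN X n U₂ = ∅) →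
      #V ≤ κ)
    {ι : Type u} (U : ι → Set X) (hU : ∀ i, IsOpen (U i)) :
    ∃ B : Set ι, #B ≤ κ ∧
      (⋃ i, U i) ⊆ gammaCl X n (⋃ i ∈ B, thetaClN X n (U i)) :=
  exists_subfamily_gammaCl_general X n κ hUc U hU
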